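/- Let k ≥ 3, let ρ be a binary central relation and σ a unary central relation on E_k, and for 2 ≤ t ≤ k let γ_t = {(a_1,…,a_t) ∈ E_k^t : ∃u ∈ σ such that (a_i,u) ∈ ρ for all 1 ≤ i ≤ t}. If Pol{ρ,σ} is maximal in Pol ρ and γ₂ = E_k², then γ_k = E_k^k. -/
import Mathlib


/-- The set of finitary operations on `Fin k` (all arities). -/
abbrev Op (k : ℕ) := Σ n : ℕ, ((Fin n → Fin k) → Fin k)

/-- An `n`-ary operation `f` preserves an `h`-ary relation `ρ`. -/
def Preserves {k n h : ℕ} (f : (Fin n → Fin k) → Fin k)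
    (ρ : Set (Fin h → Fin k)) : Prop :=
  ∀ a : Fin h → Fin n → Fin k,
    (∀ i : Fin n, (fun j => a j i) ∈ ρ) → (fun j => f (a j)) ∈ ρ

/-- An `n`-ary operation preserves a unary relation (a subset of `Fin k`). -/
def PreservesU {k n : ℕ} (f : (Fin n → Fin k) → Fin k) (σ : Set (Fin k)) : Prop :=
  ∀ x : Fin n → Fin k, (∀ i, x i ∈ σ) → f x ∈ σ

/-- `Pol ρ` for a single `h`-ary relation. -/
def Pol1 {k h : ℕ} (ρ : Set (Fin h → Fin k)) : Set (Op k) :=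
  {f | Preserves f.2 ρ}

/-- `Pol {ρ, σ}` for two relations of possibly different arities. -/
def Pol2 {k h s : ℕ} (ρ : Set (Fin h → Fin k)) (σ : Set (Fin s → Fin k)) : Set (Op k) :=
  Pol1 ρ ∩ Pol1 σ

/-- `Pol σ` for a unary relation. -/
def PolU {k : ℕ} (σ : Set (Fin k)) : Set (Op k) :=
  {f | PreservesU f.2 σ}

/-- A clone: contains all projections and is closed under composition. -/
structure IsClone (k : ℕ) (C : Set (Op k)) : Prop where
  proj : ∀ (n : ℕ) (i : Fin n), (⟨n, fun x => x i⟩ : Op k) ∈ C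
  comp : ∀ (n m : ℕ) (g : (Fin m → Fin k) → Fin k)
      (f : Fin m → (Fin n → Fin k) → Fin k),
      (⟨m, g⟩ : Op k) ∈ C → (∀ i, (⟨n, f i⟩ : Op k) ∈ C) →
      (⟨n, fun x => g fun i => f i x⟩ : Op k) ∈ C

/-- `C` is maximal in `D`: `C ⊊ D` and no clone lies strictly between them. -/
def MaximalIn {k : ℕ} (C D : Set (Op k)) : Prop :=
  C ⊂ D ∧ ∀ E : Set (Op k), IsClone k E → ¬(C ⊂ E ∧ E ⊂ D)

/-- The clone generated by a set `F` of operations. -/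
def CloneGen (k : ℕ) (F : Set (Op k)) : Set (Op k) :=
  ⋂₀ {C : Set (Op k) | IsClone k C ∧ F ⊆ C}

/-- Totally reflexive: contains every tuple with a repeated entry. -/
def TotallyReflexive {k h : ℕ} (ρ : Set (Fin h → Fin k)) : Prop :=
  ∀ a : Fin h → Fin k, (∃ i j : Fin h, i ≠ j ∧ a i = a j) → a ∈ ρ

/-- Totally symmetric: invariant under all permutations of coordinates. -/
def TotallySymmetric {k h : ℕ} (ρ : Set (Fin h → Fin k)) : Prop :=
  ∀ a ∈ ρ, ∀ π : Equiv.Perm (Fin h), (a ∘ π) ∈ ρ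

/-- The center of an `h`-ary relation: those `c` such that every tuple whose
first coordinate is `c` belongs to the relation. -/
def Center {k h : ℕ} (ρ : Set (Fin h → Fin k)) : Set (Fin k) :=
  {c | ∀ a : Fin h → Fin k, (∀ i : Fin h, (i : ℕ) = 0 → a i = c) → a ∈ ρ}

/-- A central relation: totally reflexive, totally symmetric, with nonempty
proper center. -/
def IsCentralRel {k h : ℕ} (ρ : Set (Fin h → Fin k)) : Prop :=
  TotallyReflexive ρ ∧ TotallySymmetric ρ ∧ (Center ρ).Nonempty ∧ Center ρ ≠ Set.univ

/-- A unary central relation: a nonempty proper subset of `Fin k`. -/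
def IsCentralU {k : ℕ} (σ : Set (Fin k)) : Prop :=
  σ.Nonempty ∧ σ ≠ Set.univ

/-- `B` is a `ρ`-chain: `B^h ⊆ ρ`. -/
def RhoChain {k h : ℕ} (ρ : Set (Fin h → Fin k)) (B : Set (Fin k)) : Prop :=
  ∀ a : Fin h → Fin k, (∀ i, a i ∈ B) → a ∈ ρ

/-- A maximal `ρ`-chain. -/
def MaxRhoChain {k h : ℕ} (ρ : Set (Fin h → Fin k)) (B : Set (Fin k)) : Prop :=
  RhoChain ρ B ∧ ∀ D : Set (Fin k), RhoChain ρ D → B ⊆ D → B = D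

/-- The arity-`h` tuple `(a, b, …, b)`; for `h = 2` this is the pair `(a, b)`. -/
def pair2 {k : ℕ} (h : ℕ) (a b : Fin k) : Fin h → Fin k :=
  fun i => if (i : ℕ) = 0 then a else b

/-- Recasting an `s`-ary relation along an arity equality `s = h`. -/
def recast {k s h : ℕ} (e : s = h) (σ : Set (Fin s → Fin k)) :
    Set (Fin h → Fin k) :=
  {a | (fun i : Fin s => a (Fin.cast e i)) ∈ σ}

/-- Type I: `σ` is unary and `C_ρ ∩ σ ≠ ∅`. -/
def TypeI {k h s : ℕ} (ρ : Set (Fin h → Fin k)) (σ : Set (Fin s → Fin k)) : Prop :=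
  s = 1 ∧ (Center ρ ∩ Center σ).Nonempty

/-- Type II: `σ` unary, `h = 2`, `ρ = {(a,b) : ∃ u ∈ σ, (a,u) ∈ ρ ∧ (b,u) ∈ ρ}`,
and every maximal `ρ`-chain meets `σ`. -/
def TypeII {k h s : ℕ} (ρ : Set (Fin h → Fin k)) (σ : Set (Fin s → Fin k)) : Prop :=
  s = 1 ∧ h = 2 ∧
  (∀ a b : Fin k, pair2 h a b ∈ ρ ↔
      ∃ u ∈ Center σ, pair2 h a u ∈ ρ ∧ pair2 h b u ∈ ρ) ∧
  ∀ B : Set (Fin k), MaxRhoChain ρ B → (B ∩ Center σ).Nonempty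

/-- Type III: `s = h` and `ρ`, `σ` are comparable. -/
def TypeIII {k h s : ℕ} (ρ : Set (Fin h → Fin k)) (σ : Set (Fin s → Fin k)) : Prop :=
  ∃ e : s = h, recast e σ ⊂ ρ ∨ ρ ⊂ recast e σ

/-- Type IV: `2 ≤ s < h` and `C_ρ ∩ C_σ ≠ ∅`. -/
def TypeIV {k h s : ℕ} (ρ : Set (Fin h → Fin k)) (σ : Set (Fin s → Fin k)) : Prop :=
  2 ≤ s ∧ s < h ∧ (Center ρ ∩ Center σ).Nonempty

/-- Type V: `2 ≤ h < s` and `λ ⊊ σ`, where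
`λ = {(a_1,…,a_s) : (a_1,…,a_h) ∈ ρ}`. -/
def TypeV {k h s : ℕ} (ρ : Set (Fin h → Fin k)) (σ : Set (Fin s → Fin k)) : Prop :=
  2 ≤ h ∧ ∃ hlt : h < s,
    {a : Fin s → Fin k | (fun i : Fin h => a (Fin.castLE hlt.le i)) ∈ ρ} ⊂ σ

/-- Type I for a unary relation given as a subset of `Fin k`. -/
def TypeIU {k h : ℕ} (ρ : Set (Fin h → Fin k)) (σ : Set (Fin k)) : Prop :=
  (Center ρ ∩ σ).Nonempty

/-- Type II for a unary relation given as a subset of `Fin k`. -/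
def TypeIIU {k h : ℕ} (ρ : Set (Fin h → Fin k)) (σ : Set (Fin k)) : Prop :=
  h = 2 ∧
  (∀ a b : Fin k, pair2 h a b ∈ ρ ↔
      ∃ u ∈ σ, pair2 h a u ∈ ρ ∧ pair2 h b u ∈ ρ) ∧
  ∀ B : Set (Fin k), MaxRhoChain ρ B → (B ∩ σ).Nonempty


/-- Auxiliary: the family of relations `γ_t`. -/
def Gam (k t : ℕ) (ρ : Set (Fin 2 → Fin k)) (σ : Set (Fin k)) : Set (Fin t → Fin k) :=
  {a | ∃ u ∈ σ, ∀ i, ![a i, u] ∈ ρ}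

lemma fin2_eta' {α : Type*} (f : Fin 2 → α) : f = ![f 0, f 1] := by
  funext j; fin_cases j <;> simp

lemma isClone_Pol1' {k h : ℕ} (ρ : Set (Fin h → Fin k)) : IsClone k (Pol1 ρ) := by
  constructor
  · intro n i a ha; exact ha i
  · intro n m g f hg hf a ha
    exact hg (fun j i => f i (a j)) fun i => hf i a ha

lemma isClone_inter' {k : ℕ} (C D : Set (Op k)) (hC : IsClone k C) (hD : IsClone k D) :
    IsClone k (C ∩ D) := by
  constructor
  · intro n i; exact ⟨hC.proj n i, hD.proj n i⟩
  · intro n m g f hg hf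
    exact ⟨hC.comp n m g f hg.1 fun i => (hf i).1, hD.comp n m g f hg.2 fun i => (hf i).2⟩

/-- Lemma 6 — if `γ₂ = E_k²` then `γ_k = E_k^k`. -/
theorem gamma_k_univ_of_gamma_two_univ {k : ℕ} (hk : 3 ≤ k)
    (ρ : Set (Fin 2 → Fin k)) (σ : Set (Fin k))
    (hρ : IsCentralRel ρ) (hσ : IsCentralU σ)
    (hmax : MaximalIn (Pol1 ρ ∩ PolU σ) (Pol1 ρ))
    (h2 : {a : Fin 2 → Fin k | ∃ u ∈ σ, ∀ i, ![a i, u] ∈ ρ} = Set.univ) :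
    {a : Fin k → Fin k | ∃ u ∈ σ, ∀ i, ![a i, u] ∈ ρ} = Set.univ := by
  classical
  obtain ⟨hrefl, hsymm, ⟨c, hc⟩, -⟩ := hρ
  obtain ⟨⟨s0, hs0⟩, hσne⟩ := hσ
  -- basic binary facts
  have refl2 : ∀ x : Fin k, ![x, x] ∈ ρ := fun x =>
    hrefl _ ⟨0, 1, by decide, rfl⟩
  have csym : ∀ x y : Fin k, ![x, y] ∈ ρ → ![y, x] ∈ ρ := by
    intro x y hxy
    have h := hsymm _ hxy (Equiv.swap 0 1)
    have : (![x, y] ∘ (Equiv.swap (0 : Fin 2) 1)) = ![y, x] := by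
      funext j; fin_cases j <;> simp
    rwa [this] at h
  have cpair : ∀ x : Fin k, ![c, x] ∈ ρ := by
    intro x
    apply hc
    intro i hi
    have : i = 0 := Fin.ext hi
    subst this; simp
  have cpair' : ∀ x : Fin k, ![x, c] ∈ ρ := fun x => csym _ _ (cpair x)
  show Gam k k ρ σ = Set.univ
  have h2' : Gam k 2 ρ σ = Set.univ := h2
  by_contra hgk
  have hex : ∃ t, 2 ≤ t ∧ Gam k t ρ σ ≠ Set.univ := ⟨k, by omega, hgk⟩
  obtain ⟨m, ⟨hm2, hmne⟩, hminlt⟩ :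
      ∃ m, (2 ≤ m ∧ Gam k m ρ σ ≠ Set.univ) ∧
        ∀ t, t < m → ¬(2 ≤ t ∧ Gam k t ρ σ ≠ Set.univ) :=
    ⟨Nat.find hex, Nat.find_spec hex, fun t ht => Nat.find_min hex ht⟩
  have hmin : ∀ t, 2 ≤ t → t < m → Gam k t ρ σ = Set.univ := by
    intro t h2t hlt
    by_contra h
    exact hminlt t hlt ⟨h2t, h⟩
  have hm3 : 3 ≤ m := by
    rcases Nat.lt_or_ge m 3 with h | h
    · exfalso
      have : m = 2 := by omega
      rw [this] at hmne
      exact hmne h2'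
    · exact h
  -- repeated entries give membership in Gam m
  have hrep : ∀ a : Fin m → Fin k, (∃ i j : Fin m, i ≠ j ∧ a i = a j) → a ∈ Gam k m ρ σ := by
    intro a ⟨i, j, hij, hval⟩
    obtain ⟨t, htm⟩ : ∃ t, m = t + 1 := ⟨m - 1, by omega⟩
    subst htm
    have hΓt : Gam k t ρ σ = Set.univ := hmin t (by omega) (by omega)
    have hb : (a ∘ j.succAbove) ∈ Gam k t ρ σ := hΓt ▸ Set.mem_univ _
    obtain ⟨u, hu, hbu⟩ := hb
    refine ⟨u, hu, fun i' => ?_⟩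
    by_cases hij' : i' = j
    · obtain ⟨p, hp⟩ := Fin.exists_succAbove_eq hij
      rw [hij', ← hval, ← hp]
      exact hbu p
    · obtain ⟨p, hp⟩ := Fin.exists_succAbove_eq hij'
      rw [← hp]
      exact hbu p
  -- a third index
  have hthird : ∀ j1 j2 : Fin m, ∃ i3 : Fin m, i3 ≠ j1 ∧ i3 ≠ j2 := by
    intro j1 j2
    by_contra h
    push_neg at h
    have hsub : (Finset.univ : Finset (Fin m)) ⊆ {j1, j2} := by
      intro x _
      simp only [Finset.mem_insert, Finset.mem_singleton]
      rcases eq_or_ne x j1 with h1 | h1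
      · exact Or.inl h1
      · exact Or.inr (h x h1)
    have h1 : m ≤ ({j1, j2} : Finset (Fin m)).card := by
      simpa using Finset.card_le_card hsub
    have h2c : ({j1, j2} : Finset (Fin m)).card ≤ 2 :=
      (Finset.card_insert_le _ _).trans (by simp)
    omega
  have hconstΓ : ∀ d : Fin k, (fun _ : Fin m => d) ∈ Gam k m ρ σ := by
    intro d
    apply hrep
    obtain ⟨i3, h3, -⟩ := hthird ⟨0, by omega⟩ ⟨0, by omega⟩
    exact ⟨i3, ⟨0, by omega⟩, h3, rfl⟩
  set γ := Gam k m ρ σ with hγdef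
  have hClE : IsClone k (Pol1 ρ ∩ Pol1 γ) := isClone_inter' _ _ (isClone_Pol1' ρ) (isClone_Pol1' γ)
  -- C ⊆ E
  have hCE : (Pol1 ρ ∩ PolU σ) ⊆ (Pol1 ρ ∩ Pol1 γ) := by
    rintro ⟨n, f⟩ ⟨hfρ, hfσ⟩
    refine ⟨hfρ, ?_⟩
    intro a ha
    choose u hu hau using ha
    refine ⟨f u, hfσ u hu, fun j => ?_⟩
    have hout := hfρ (fun l i => ![a j i, u i] l) (fun i => hau i j)
    have heq : (fun l => f (fun i => ![a j i, u i] l)) = ![f (a j), f u] := by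
      funext l
      fin_cases l <;> simp
    rwa [heq] at hout
  -- the constant ∉ σ witnesses strictness of C ⊂ E
  obtain ⟨d, hd⟩ : ∃ d, d ∉ σ := by
    by_contra h; push_neg at h; exact hσne (Set.eq_univ_of_forall h)
  have hf0E : (⟨1, fun _ => d⟩ : Op k) ∈ (Pol1 ρ ∩ Pol1 γ) := by
    constructor
    · intro a ha
      have heq : (fun j : Fin 2 => d) = ![d, d] := by
        funext j; fin_cases j <;> simp
      show (fun j : Fin 2 => d) ∈ ρ
      rw [heq]; exact refl2 d
    · intro a ha
      exact hconstΓ d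
  have hf0C : (⟨1, fun _ => d⟩ : Op k) ∉ (Pol1 ρ ∩ PolU σ) := by
    rintro ⟨-, hfσ'⟩
    exact hd (hfσ' (fun _ => s0) (fun _ => hs0))
  -- construct g ∈ Pol ρ \ Pol γ
  obtain ⟨bbad, hbbad⟩ : ∃ b : Fin m → Fin k, b ∉ γ := by
    by_contra h; push_neg at h; exact hmne (Set.eq_univ_of_forall h)
  haveI : Fintype ↥γ := Fintype.ofFinite _
  set n := Fintype.card ↥γ with hndef
  set e : Fin n ≃ ↥γ := (Fintype.equivFin ↥γ).symm with hedef
  set r : Fin m → Fin n → Fin k := fun j i => (e i).1 j with hrdef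
  have hcolmem : ∀ i, (fun j => r j i) ∈ γ := fun i => (e i).2
  have hrdist : ∀ j j' : Fin m, r j = r j' → j = j' := by
    intro j j' hjj'
    by_contra hne
    have hw : (fun i : Fin m => if i = j then (⟨1, by omega⟩ : Fin k) else ⟨0, by omega⟩) ∈ γ := by
      apply hrep
      obtain ⟨i3, h3, -⟩ := hthird j j
      obtain ⟨i4, h4, h4'⟩ := hthird j i3
      exact ⟨i3, i4, Ne.symm h4', by simp [h3, h4]⟩
    have hcol := congrFun hjj' (e.symm ⟨_, hw⟩)
    rw [hrdef] at hcol
    simp only [Equiv.apply_symm_apply] at hcol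
    simp [Ne.symm hne, Fin.ext_iff] at hcol
  obtain ⟨g, hg_row, hg_non⟩ :
      ∃ g : (Fin n → Fin k) → Fin k,
        (∀ j, g (r j) = bbad j) ∧ (∀ x, (¬ ∃ j, x = r j) → g x = c) := by
    refine ⟨fun x => if h : ∃ j, x = r j then bbad h.choose else c, ?_, ?_⟩
    · intro j
      have hex' : ∃ j', r j = r j' := ⟨j, rfl⟩
      simp only [dif_pos hex']
      exact congrArg bbad (hrdist _ _ hex'.choose_spec).symm
    · intro x hx
      simp only [dif_neg hx]
  have hgρ : Preserves g ρ := by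
    intro a ha
    have hgoal : (fun j : Fin 2 => g (a j)) = ![g (a 0), g (a 1)] := by
      funext j; fin_cases j <;> simp
    show (fun j : Fin 2 => g (a j)) ∈ ρ
    rw [hgoal]
    by_cases h0 : ∃ j, a 0 = r j
    · obtain ⟨j1, hj1⟩ := h0
      by_cases h1 : ∃ j, a 1 = r j
      · obtain ⟨j2, hj2⟩ := h1
        rw [hj1, hj2, hg_row, hg_row]
        rcases eq_or_ne j1 j2 with hjj | hjj
        · rw [hjj]; exact refl2 _
        · obtain ⟨i3, h3, h3'⟩ := hthird j1 j2
          have hw : (fun i : Fin m => if i = j1 then bbad j1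
              else if i = j2 then bbad j2 else bbad j1) ∈ γ := by
            apply hrep
            exact ⟨i3, j1, h3, by simp [h3, h3']⟩
          have hcol := ha (e.symm ⟨_, hw⟩)
          have ha0 : a 0 (e.symm ⟨_, hw⟩) = bbad j1 := by
            rw [hj1, hrdef]
            simp only [Equiv.apply_symm_apply]
            simp
          have ha1 : a 1 (e.symm ⟨_, hw⟩) = bbad j2 := by
            rw [hj2, hrdef]
            simp only [Equiv.apply_symm_apply]
            simp [hjj.symm]
          have heq2 : (fun j : Fin 2 => a j (e.symm ⟨_, hw⟩)) = ![bbad j1, bbad j2] := by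
            funext j; fin_cases j
            · simpa using ha0
            · simpa using ha1
          rwa [heq2] at hcol
      · rw [hj1, hg_row, hg_non _ h1]
        exact cpair' _
    · rw [hg_non _ h0]
      by_cases h1 : ∃ j, a 1 = r j
      · obtain ⟨j2, hj2⟩ := h1
        rw [hj2, hg_row]
        exact cpair _
      · rw [hg_non _ h1]
        exact cpair _
  have hgγ : ¬ Preserves g γ := by
    intro hpres
    have hres := hpres r hcolmem
    have heq : (fun j => g (r j)) = bbad := funext hg_row
    rw [heq] at hres
    exact hbbad hres
  -- contradiction with maximality
  apply hmax.2 (Pol1 ρ ∩ Pol1 γ) hClE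
  constructor
  · rw [Set.ssubset_def]
    exact ⟨hCE, fun hsub => hf0C (hsub hf0E)⟩
  · rw [Set.ssubset_def]
    refine ⟨Set.inter_subset_left, fun hsub => ?_⟩
    have hmem : (⟨n, g⟩ : Op k) ∈ Pol1 ρ := hgρ
    exact hgγ (hsub hmem).2
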